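/- arXiv:1910.08793 — 2 statements merged into one kernel-verified Lean document; each statement's English description precedes it below -/
import Mathlib

section
/- Let T be a normal Suslin tree with rational successors and let S be its lexicographical order. Then S is a linear order which is not separable. -/
noncomputable section

def omega1 : Ordinal.{0} := (Cardinal.aleph 1).ord

/-- A tree presented by a partial order together with a height function `ht` into the
ordinals: heights are strictly monotone, the predecessors of any node form a chain, and
below any node there is a (necessarily unique) predecessor of each smaller height.
These axioms say exactly that the set of strict predecessors of `x` is well-ordered
with order type `ht x`. -/
structure TreeSystem (T : Type*) [PartialOrder T] where
  ht : T → Ordinal.{0}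
  ht_strictMono : ∀ {x y : T}, x < y → ht x < ht y
  pred_chain : ∀ x y z : T, y < x → z < x → y ≤ z ∨ z ≤ y
  pred_exists : ∀ x : T, ∀ o, o < ht x → ∃ z, z < x ∧ ht z = o

variable {T : Type*} [PartialOrder T]

/-- An antichain in the tree sense: pairwise incomparable. -/
def IsTreeAntichain (A : Set T) : Prop :=
  ∀ x ∈ A, ∀ y ∈ A, x ≠ y → ¬ x ≤ y ∧ ¬ y ≤ x

/-- An antichain of the forcing poset `P_T` (whose order is the reverse of the tree
order): pairwise incompatible, i.e. no two distinct members have a common upper bound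
in the tree order. -/
def IsForcingAntichain (A : Set T) : Prop :=
  ∀ p ∈ A, ∀ q ∈ A, p ≠ q → ¬ ∃ r : T, p ≤ r ∧ q ≤ r

def NoUncountableChain (T : Type*) [PartialOrder T] : Prop :=
  ¬ ∃ C : Set T, IsChain (· ≤ ·) C ∧ ¬ C.Countable

def NoUncountableAntichain (T : Type*) [PartialOrder T] : Prop :=
  ¬ ∃ A : Set T, IsTreeAntichain A ∧ ¬ A.Countable

/-- A tree is special if it carries a function to `ω` taking distinct values on
comparable pairs. -/
def SpecialTree (T : Type*) [PartialOrder T] : Prop :=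
  ∃ f : T → ℕ, ∀ x y : T, x < y → f x ≠ f y

namespace TreeSystem

/-- An ω₁-tree: all nodes have height `< ω₁`, all levels are countable, and
the height of the tree is ω₁ (all levels below ω₁ are nonempty). -/
def IsOmegaOneTree (S : TreeSystem T) : Prop :=
  (∀ x : T, S.ht x < omega1) ∧
  (∀ o : Ordinal, {x : T | S.ht x = o}.Countable) ∧
  (∀ o, o < omega1 → ∃ x : T, S.ht x = o)

/-- A Suslin tree: an ω₁-tree with no uncountable chain and no uncountable antichain. -/
def IsSuslin (S : TreeSystem T) : Prop :=
  S.IsOmegaOneTree ∧ NoUncountableChain T ∧ NoUncountableAntichain T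

/-- An Aronszajn tree: an ω₁-tree with no uncountable chain. -/
def IsAronszajn (S : TreeSystem T) : Prop :=
  S.IsOmegaOneTree ∧ NoUncountableChain T

/-- A special ω₁-tree. -/
def IsSpecial (S : TreeSystem T) : Prop :=
  S.IsOmegaOneTree ∧ SpecialTree T

/-- `Δ(x,y)`: the order type of the set `{z : z ≤ x and z ≤ y}` of common lower
bounds, computed as the supremum of `ht z + 1` over that (downward closed) chain. -/
def Delta (S : TreeSystem T) (x y : T) : Ordinal :=
  sSup ((fun z => S.ht z + 1) '' {z : T | z ≤ x ∧ z ≤ y})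

/-- The height of the tree: the least ordinal which is not the height of a node. -/
def height (S : TreeSystem T) : Ordinal :=
  sSup (Set.range fun x : T => S.ht x + 1)

/-- Normality for a tree of height ω₁ (so that every node has nodes of every
larger height `< ω₁` above it and splits): (a) every node has two incomparable nodes
above it; (b) every node has nodes above it at every height `< ω₁`; (c) two nodes of
the same non-successor (i.e. zero or limit) height with the same predecessors
are equal. -/
def IsNormal (S : TreeSystem T) : Prop :=
  (∀ x : T, ∃ y z : T, x < y ∧ x < z ∧ ¬ y ≤ z ∧ ¬ z ≤ y) ∧
  (∀ x : T, ∀ o, S.ht x ≤ o → o < omega1 → ∃ y, x ≤ y ∧ S.ht y = o) ∧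
  (∀ x y : T, S.ht x = S.ht y → (∀ p, S.ht x ≠ p + 1) →
    (∀ z : T, z < x ↔ z < y) → x = y)

/-- Normality for a tree of arbitrary height `S.height`. -/
def IsNormalGen (S : TreeSystem T) : Prop :=
  (∀ x : T, S.ht x + 1 < S.height → ∃ y z : T, x < y ∧ x < z ∧ ¬ y ≤ z ∧ ¬ z ≤ y) ∧
  (∀ x : T, ∀ o, S.ht x ≤ o → o < S.height → ∃ y, x ≤ y ∧ S.ht y = o) ∧
  (∀ x y : T, S.ht x = S.ht y → (∀ p, S.ht x ≠ p + 1) →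
    (∀ z : T, z < x ↔ z < y) → x = y)

/-- The set of immediate successors of `x`. -/
def ImmSucc (S : TreeSystem T) (x : T) : Set T :=
  {y : T | x < y ∧ S.ht y = S.ht x + 1}

/-- `T` has rational successors, as witnessed by the position function `q`: for each
node `x`, `q` is injective on the immediate successors of `x` and induces on them a
linear order isomorphic to the rationals. -/
def RationalSuccessors (S : TreeSystem T) (q : T → ℚ) : Prop :=
  ∀ x : T, Set.InjOn q (S.ImmSucc x) ∧ Nonempty ((q '' S.ImmSucc x) ≃o ℚ)

/-- The lexicographical order on the nodes of a tree with rational successors: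
`a <_S b` iff `a <_T b`, or `a, b` are incomparable and the immediate successor `y`
(of their maximal common predecessor `x`) below `a` precedes the one `z` below `b`
in the rational ordering of the successors of `x`. -/
def LexLt (S : TreeSystem T) (q : T → ℚ) (a b : T) : Prop :=
  a < b ∨ (¬ a ≤ b ∧ ¬ b ≤ a ∧ ∃ x y z : T,
    x < y ∧ x < z ∧ y ≤ a ∧ z ≤ b ∧
    S.ht y = S.ht x + 1 ∧ S.ht z = S.ht x + 1 ∧ q y < q z)

/-- Separability for the lexicographical order. -/
def LexSeparable (S : TreeSystem T) (q : T → ℚ) : Prop :=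
  ∃ D : Set T, D.Countable ∧ ∀ a b : T, S.LexLt q a b →
    (∃ c, S.LexLt q a c ∧ S.LexLt q c b) →
    ∃ d ∈ D, S.LexLt q a d ∧ S.LexLt q d b

/-- The countable chain condition for the lexicographical order: no uncountable family
of pairwise disjoint nonempty open intervals. -/
def LexCCC (S : TreeSystem T) (q : T → ℚ) : Prop :=
  ¬ ∃ I : Set (T × T), ¬ I.Countable ∧
    (∀ p ∈ I, ∃ c, S.LexLt q p.1 c ∧ S.LexLt q c p.2) ∧
    (∀ p ∈ I, ∀ r ∈ I, p ≠ r →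
      ¬ ∃ c, (S.LexLt q p.1 c ∧ S.LexLt q c p.2) ∧
             (S.LexLt q r.1 c ∧ S.LexLt q c r.2))

/-- The tree `T^n` of `n`-tuples of nodes of equal height, ordered coordinatewise
(as a subtype of the pointwise product order). -/
abbrev ProdTree (S : TreeSystem T) (n : ℕ) : Type _ :=
  {f : Fin n → T // ∀ i j : Fin n, S.ht (f i) = S.ht (f j)}

/-- `n`-entangledness of an ω₁-tree: every ω₁-sequence of pairwise disjoint injective
`n`-tuples with `{Δ(a_{ξ,i}, a_{ξ,j}) : i < j < n, ξ < ω₁}` bounded in ω₁ realizes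
every type `g : n → 2`, where `1` means `<_T` and `0` means `¬ <_T`. -/
def Entangled (S : TreeSystem T) (n : ℕ) : Prop :=
  ∀ a : Ordinal → ℕ → T,
    (∀ ξ, ξ < omega1 → ∀ i, i < n → ∀ j, j < n → i ≠ j → a ξ i ≠ a ξ j) →
    (∀ ξ, ξ < omega1 → ∀ δ, δ < omega1 → ξ ≠ δ →
      ∀ i, i < n → ∀ j, j < n → a ξ i ≠ a δ j) →
    (∃ β, β < omega1 ∧ ∀ ξ, ξ < omega1 → ∀ i j : ℕ, i < j → j < n →
      S.Delta (a ξ i) (a ξ j) ≤ β) →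
    ∀ g : ℕ → Bool, ∃ ξ β : Ordinal, ξ < β ∧ β < omega1 ∧
      ∀ i, i < n → (a ξ i < a β i ↔ g i = true)

end TreeSystem

end

/-!
Transitivity and irreflexivity are bookkeeping about where two branches part. Totality needs
normality: two incomparable nodes part at a successor level, because the least level where their
predecessors differ cannot be a limit. For non-separability, a countable `D` has heights bounded by
some `β < ω₁`; if `x` has height `β` and `u, v, w` are immediate successors of `x` with
`q u < q v < q w`, then the interval `(u, w)` is nonempty, but all its nodes lie above `x`, hence
miss `D`.
-/

namespace TreeSystem

open Ordinal

variable {T : Type*} [PartialOrder T] (S : TreeSystem T) {q : T → ℚ}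

lemma eq_of_le_of_ht_le {u v : T} (h : u ≤ v) (hh : S.ht v ≤ S.ht u) : u = v :=
  h.eq_of_not_lt fun h' => (S.ht_strictMono h').not_ge hh

lemma le_of_ht_le {u v w : T} (hu : u ≤ w) (hv : v ≤ w) (h : S.ht u ≤ S.ht v) : u ≤ v := by
  rcases hu.lt_or_eq with hu | rfl
  · rcases hv.lt_or_eq with hv | rfl
    · rcases S.pred_chain w u v hu hv with huv | hvu
      · exact huv
      · exact (S.eq_of_le_of_ht_le hvu h).ge
    · exact hu.le
  · exact (S.eq_of_le_of_ht_le hv h).ge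

lemma eq_of_ht_eq {u v w : T} (hu : u ≤ w) (hv : v ≤ w) (h : S.ht u = S.ht v) : u = v :=
  le_antisymm (S.le_of_ht_le hu hv h.le) (S.le_of_ht_le hv hu h.ge)

lemma exists_le_ht_eq (a : T) {o : Ordinal} (h : o ≤ S.ht a) : ∃ y ≤ a, S.ht y = o := by
  rcases h.lt_or_eq with h | rfl
  · obtain ⟨z, hz, rfl⟩ := S.pred_exists a o h
    exact ⟨z, hz.le, rfl⟩
  · exact ⟨a, le_rfl, rfl⟩

def BranchLt (q : T → ℚ) (a b : T) : Prop :=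
  ∃ x y z : T, x < y ∧ x < z ∧ y ≤ a ∧ z ≤ b ∧
    S.ht y = S.ht x + 1 ∧ S.ht z = S.ht x + 1 ∧ q y < q z

variable {S}

lemma BranchLt.not_le_and_not_ge {a b : T} (h : S.BranchLt q a b) : ¬ a ≤ b ∧ ¬ b ≤ a := by
  obtain ⟨x, y, z, -, -, hya, hzb, hy, hz, hyz⟩ := h
  have hht : S.ht y = S.ht z := hy.trans hz.symm
  exact ⟨fun hab => hyz.ne (congrArg q (S.eq_of_ht_eq (hya.trans hab) hzb hht)),
    fun hba => hyz.ne (congrArg q (S.eq_of_ht_eq hya (hzb.trans hba) hht))⟩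

lemma lexLt_iff {a b : T} : S.LexLt q a b ↔ a < b ∨ S.BranchLt q a b :=
  ⟨Or.imp_right fun h => h.2.2,
    Or.imp_right fun h => ⟨h.not_le_and_not_ge.1, h.not_le_and_not_ge.2, h⟩⟩

lemma BranchLt.trans_le {a b c : T} (h : S.BranchLt q a b) (hbc : b ≤ c) :
    S.BranchLt q a c :=
  let ⟨x, y, z, hxy, hxz, hya, hzb, hy, hz, hyz⟩ := h
  ⟨x, y, z, hxy, hxz, hya, hzb.trans hbc, hy, hz, hyz⟩

lemma BranchLt.lexLt_of_le {a b c : T} (hab : a ≤ b) (h : S.BranchLt q b c) :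
    S.LexLt q a c := by
  obtain ⟨x, y, z, hxy, hxz, hyb, hzc, hy, hz, hyz⟩ := h
  rcases le_or_gt (S.ht a) (S.ht x) with h | h
  · exact lexLt_iff.2 <| .inl <|
      (S.le_of_ht_le hab (hxy.le.trans hyb) h).trans_lt (hxz.trans_le hzc)
  · have hya : y ≤ a := S.le_of_ht_le hyb hab (hy ▸ Order.add_one_le_iff.2 h)
    exact lexLt_iff.2 (.inr ⟨x, y, z, hxy, hxz, hya, hzc, hy, hz, hyz⟩)

lemma BranchLt.trans {a b c : T} (hab : S.BranchLt q a b) (hbc : S.BranchLt q b c) :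
    S.BranchLt q a c := by
  obtain ⟨x, y, z, hxy, hxz, hya, hzb, hy, hz, hyz⟩ := hab
  obtain ⟨x', y', z', hxy', hxz', hy'b, hz'c, hy', hz', hyz'⟩ := hbc
  have hxb : x ≤ b := hxz.le.trans hzb
  have hx'b : x' ≤ b := hxy'.le.trans hy'b
  rcases lt_trichotomy (S.ht x) (S.ht x') with h | h | h
  · have hzx' : z ≤ x' := S.le_of_ht_le hzb hx'b (hz ▸ Order.add_one_le_iff.2 h)
    exact ⟨x, y, z, hxy, hxz, hya, hzx'.trans (hxz'.le.trans hz'c), hy, hz, hyz⟩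
  · obtain rfl : x = x' := S.eq_of_ht_eq hxb hx'b h
    obtain rfl : z = y' := S.eq_of_ht_eq hzb hy'b (hz.trans hy'.symm)
    exact ⟨x, y, z', hxy, hxz', hya, hz'c, hy, hz', hyz.trans hyz'⟩
  · have hy'x : y' ≤ x := S.le_of_ht_le hy'b hxb (hy' ▸ Order.add_one_le_iff.2 h)
    exact ⟨x', y', z', hxy', hxz', hy'x.trans (hxy.le.trans hya), hz'c, hy', hz', hyz'⟩

lemma lexLt_irrefl (a : T) : ¬ S.LexLt q a a := by
  rw [lexLt_iff]
  rintro (h | h)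
  exacts [lt_irrefl a h, h.not_le_and_not_ge.1 le_rfl]

lemma lexLt_trans {a b c : T} (hab : S.LexLt q a b) (hbc : S.LexLt q b c) : S.LexLt q a c := by
  rcases lexLt_iff.1 hab with hab | hab <;> rcases lexLt_iff.1 hbc with hbc | hbc
  · exact lexLt_iff.2 (.inl (hab.trans hbc))
  · exact hbc.lexLt_of_le hab.le
  · exact lexLt_iff.2 (.inr (hab.trans_le hbc.le))
  · exact lexLt_iff.2 (.inr (hab.trans hbc))

lemma lexLt_asymm {a b : T} (hab : S.LexLt q a b) : ¬ S.LexLt q b a :=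
  fun hba => lexLt_irrefl a (lexLt_trans hab hba)

variable (S)

lemma exists_branchPoint (hnorm : S.IsNormal) {a b : T} (hab : ¬ a ≤ b) (hba : ¬ b ≤ a) :
    ∃ x y z : T, x < y ∧ x < z ∧ y ≤ a ∧ z ≤ b ∧
      S.ht y = S.ht x + 1 ∧ S.ht z = S.ht x + 1 ∧ y ≠ z := by
  let Differ : Ordinal → Prop := fun o =>
    ∃ u ≤ a, ∃ v ≤ b, S.ht u = o ∧ S.ht v = o ∧ u ≠ v
  have hdiffer : ∃ o, Differ o := by
    rcases le_total (S.ht a) (S.ht b) with h | h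
    · obtain ⟨v, hvb, hv⟩ := S.exists_le_ht_eq b h
      exact ⟨_, a, le_rfl, v, hvb, rfl, hv, fun hav => hab (hav ▸ hvb)⟩
    · obtain ⟨u, hua, hu⟩ := S.exists_le_ht_eq a h
      exact ⟨_, u, hua, b, le_rfl, hu, rfl, fun hub => hba (hub ▸ hua)⟩
  obtain ⟨o, ⟨u, hua, v, hvb, hu, hv, huv⟩, hmin⟩ := wellFounded_lt.has_min _ hdiffer
  have agree : ∀ u' ≤ a, ∀ v' ≤ b, S.ht u' = S.ht v' → S.ht u' < o → u' = v' :=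
    fun u' hu' v' hv' h hlt =>
      by_contra fun hne => hmin _ ⟨u', hu', v', hv', rfl, h.symm, hne⟩ hlt
  -- At a limit level (or at the root), `u` and `v` would have the same predecessors.
  obtain ⟨p, rfl⟩ : ∃ p, o = p + 1 := by
    by_contra! hlim
    refine huv (hnorm.2.2 u v (hu.trans hv.symm) (hu ▸ hlim) fun w =>
      ⟨fun hw => ?_, fun hw => ?_⟩)
    · have hwo : S.ht w < o := hu ▸ S.ht_strictMono hw
      obtain ⟨w', hw', hht⟩ := S.pred_exists v (S.ht w) (hv ▸ hwo)
      rwa [agree w (hw.le.trans hua) w' (hw'.le.trans hvb) hht.symm hwo]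
    · have hwo : S.ht w < o := hv ▸ S.ht_strictMono hw
      obtain ⟨w', hw', hht⟩ := S.pred_exists u (S.ht w) (hu ▸ hwo)
      rwa [← agree w' (hw'.le.trans hua) w (hw.le.trans hvb) hht (hht ▸ hwo)]
  obtain ⟨x, hxu, hx⟩ := S.pred_exists u p (hu ▸ Order.lt_add_one_iff.2 le_rfl)
  obtain ⟨x', hx'v, hx'⟩ := S.pred_exists v p (hv ▸ Order.lt_add_one_iff.2 le_rfl)
  obtain rfl := agree x (hxu.le.trans hua) x' (hx'v.le.trans hvb) (hx.trans hx'.symm)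
    (hx ▸ Order.lt_add_one_iff.2 le_rfl)
  exact ⟨x, u, v, hxu, hx'v, hua, hvb, hx ▸ hu, hx ▸ hv, huv⟩

lemma lexLt_total (hnorm : S.IsNormal) (hq : ∀ x, Set.InjOn q (S.ImmSucc x)) {a b : T}
    (hne : a ≠ b) : S.LexLt q a b ∨ S.LexLt q b a := by
  simp only [lexLt_iff]
  by_cases hab : a ≤ b
  · exact .inl (.inl (hab.lt_of_ne hne))
  by_cases hba : b ≤ a
  · exact .inr (.inl (hba.lt_of_ne hne.symm))
  obtain ⟨x, y, z, hxy, hxz, hya, hzb, hy, hz, hyz⟩ := S.exists_branchPoint hnorm hab hba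
  rcases lt_or_gt_of_ne fun h => hyz (hq x ⟨hxy, hy⟩ ⟨hxz, hz⟩ h) with h | h
  · exact .inl (.inr ⟨x, y, z, hxy, hxz, hya, hzb, hy, hz, h⟩)
  · exact .inr (.inr ⟨x, z, y, hxz, hxy, hzb, hya, hz, hy, h⟩)

lemma lt_of_lexLt_of_lexLt {x u t w : T} (hu : x < u) (hw : x < w) (hut : S.LexLt q u t)
    (htw : S.LexLt q t w) : x < t := by
  rcases lexLt_iff.1 hut with hut | ⟨x', y, z, hx'y, hx'z, hyu, hzt, hy, hz, hyz⟩
  · exact hu.trans hut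
  rcases le_or_gt (S.ht y) (S.ht x) with h | h
  · have hyw : y ≤ w := (S.le_of_ht_le hyu hu.le h).trans hw.le
    have hwt : S.LexLt q w t := lexLt_iff.2 (.inr ⟨x', y, z, hx'y, hx'z, hyw, hzt, hy, hz, hyz⟩)
    exact absurd htw (lexLt_asymm hwt)
  · have hxx' : x ≤ x' :=
      S.le_of_ht_le hu.le (hx'y.le.trans hyu) (Order.lt_add_one_iff.1 (hy ▸ h))
    exact hxx'.trans_lt (hx'z.trans_le hzt)

lemma exists_ht_lt_of_countable (hT : S.IsOmegaOneTree) {D : Set T} (hD : D.Countable) :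
    ∃ β < omega1, ∀ d ∈ D, S.ht d < β := by
  have : Countable D := hD.to_subtype
  have hω : omega1 = ω_ 1 := Cardinal.ord_aleph 1
  have hlim : Order.IsSuccLimit omega1 := Cardinal.isSuccLimit_ord (Cardinal.aleph0_le_aleph 1)
  refine ⟨⨆ d : D, S.ht d + 1, ?_, fun d hd => ?_⟩
  · rw [hω]
    exact iSup_lt_omega_one fun d => hω ▸ hlim.add_one_lt (hT.1 d)
  · exact (Order.lt_add_one_iff.2 le_rfl).trans_le
      (Ordinal.le_iSup (fun d : D => S.ht d + 1) ⟨d, hd⟩)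

lemma exists_immSucc_lt_lt (hq : S.RationalSuccessors q) (x : T) :
    ∃ u ∈ S.ImmSucc x, ∃ v ∈ S.ImmSucc x, ∃ w ∈ S.ImmSucc x, q u < q v ∧ q v < q w := by
  obtain ⟨e⟩ := (hq x).2
  obtain ⟨u, hu, hqu⟩ := (e.symm 0).2
  obtain ⟨v, hv, hqv⟩ := (e.symm 1).2
  obtain ⟨w, hw, hqw⟩ := (e.symm 2).2
  refine ⟨u, hu, v, hv, w, hw, ?_, ?_⟩
  · rw [hqu, hqv, Subtype.coe_lt_coe, e.symm.lt_iff_lt]; norm_num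
  · rw [hqv, hqw, Subtype.coe_lt_coe, e.symm.lt_iff_lt]; norm_num

lemma lexLt_of_mem_immSucc {x u w : T} (hu : u ∈ S.ImmSucc x) (hw : w ∈ S.ImmSucc x)
    (huw : q u < q w) : S.LexLt q u w :=
  lexLt_iff.2 (.inr ⟨x, u, w, hu.1, hw.1, le_rfl, le_rfl, hu.2, hw.2, huw⟩)

theorem not_lexSeparable (hT : S.IsOmegaOneTree) (hq : S.RationalSuccessors q) :
    ¬ S.LexSeparable q := by
  rintro ⟨D, hD, hsep⟩
  obtain ⟨β, hβ, hDβ⟩ := S.exists_ht_lt_of_countable hT hD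
  obtain ⟨x, rfl⟩ := hT.2.2 β hβ
  obtain ⟨u, hu, v, hv, w, hw, huv, hvw⟩ := S.exists_immSucc_lt_lt hq x
  obtain ⟨d, hdD, hud, hdw⟩ := hsep u w (S.lexLt_of_mem_immSucc hu hw (huv.trans hvw))
    ⟨v, S.lexLt_of_mem_immSucc hu hv huv, S.lexLt_of_mem_immSucc hv hw hvw⟩
  exact (hDβ d hdD).not_gt (S.ht_strictMono (S.lt_of_lexLt_of_lexLt hu.1 hw.1 hud hdw))

end TreeSystem

/-- the lexicographical order of a normal Suslin tree with rational
successors is a linear order (irreflexive, transitive, total) which is not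
separable. -/
theorem stmt12 {T : Type*} [PartialOrder T] (S : TreeSystem T)
    (hnorm : S.IsNormal) (hsus : S.IsSuslin) (q : T → ℚ)
    (hq : S.RationalSuccessors q) :
    (∀ a : T, ¬ S.LexLt q a a) ∧
    (∀ a b c : T, S.LexLt q a b → S.LexLt q b c → S.LexLt q a c) ∧
    (∀ a b : T, a ≠ b → S.LexLt q a b ∨ S.LexLt q b a) ∧
    ¬ S.LexSeparable q :=
  ⟨TreeSystem.lexLt_irrefl, fun _ _ _ => TreeSystem.lexLt_trans,
    fun _ _ => S.lexLt_total hnorm fun x => (hq x).1, S.not_lexSeparable hsus.1 hq⟩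
end

section
/- For every ω₁-tree T and n ≥ 1: T is n-entangled if and only if for every injective c⃗ ∈ T^n and every ω₁-sequence ⟨(a_{ξ,0},…,a_{ξ,n−1}) : ξ < ω₁⟩ of n-tuples above c⃗ with increasing height, for every g : n → 2 there exist ξ < β with a_{ξ,i} <_T a_{β,i} iff g(i) = 1 for all i < n. -/
/-!
Forward direction: tuples above a fixed injective tuple `c⃗` of equal height are injective,
and two of their coordinates can only meet below the level of `c⃗`, so their `Δ`-values are
bounded; increasing height makes the tuples pairwise disjoint.

Backward direction: given pairwise disjoint injective tuples with `Δ` bounded by `β₀ < ω₁`,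
only countably many tuples have a coordinate of height `≤ β₀`, since levels are countable.
Projecting the remaining ones to level `β₀` and using that this level is countable, uncountably
many of them lie above one tuple `c⃗`, which is injective because `Δ < β₀ + 1`. Since
countably many tuples only reach countably many heights, a transfinite recursion then
extracts from these an ω₁-sequence of increasing height.
-/

lemma omega1_isSuccLimit : Order.IsSuccLimit omega1 :=
  Cardinal.isSuccLimit_ord (Cardinal.aleph0_le_aleph 1)

lemma add_one_lt_omega1 {o : Ordinal.{0}} (h : o < omega1) : o + 1 < omega1 := by
  rw [← Order.succ_eq_add_one]
  exact omega1_isSuccLimit.succ_lt h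

lemma countable_Iio_of_lt_omega1 {o : Ordinal.{0}} (h : o < omega1) :
    (Set.Iio o).Countable := by
  rw [← Cardinal.le_aleph0_iff_set_countable, Cardinal.mk_Iio_ordinal, Cardinal.lift_le_aleph0,
    ← Cardinal.lt_aleph_one_iff, ← Cardinal.lt_ord]
  exact h

lemma countable_Iic_of_lt_omega1 {o : Ordinal.{0}} (h : o < omega1) :
    (Set.Iic o).Countable := by
  rw [← Order.Iio_succ]
  exact countable_Iio_of_lt_omega1 (omega1_isSuccLimit.succ_lt h)

lemma not_countable_Iio_omega1 : ¬ (Set.Iio omega1).Countable := by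
  rw [← Cardinal.le_aleph0_iff_set_countable, Cardinal.mk_Iio_ordinal, Cardinal.lift_le_aleph0,
    omega1, Cardinal.card_ord, ← Cardinal.lt_aleph_one_iff]
  exact lt_irrefl _

lemma Set.exists_not_countable_inter_preimage_singleton {α β : Type*} {s : Set α}
    (hs : ¬ s.Countable) {t : Set β} (ht : t.Countable) {f : α → β} (hf : Set.MapsTo f s t) :
    ∃ b, ¬ (s ∩ f ⁻¹' {b}).Countable := by
  by_contra! hfib
  exact hs <| (ht.biUnion fun b _ => hfib b).mono fun x hx =>
    Set.mem_biUnion (hf hx) (show x ∈ s ∩ f ⁻¹' {f x} from ⟨hx, rfl⟩)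

lemma exists_rel_seq_of_countable_not_rel {α : Type*} {X : Set α} (hX : ¬ X.Countable)
    {R : α → α → Prop} (hR : ∀ p ∈ X, {ξ | ξ ∈ X ∧ ¬ R p ξ}.Countable) :
    ∃ f : Ordinal.{0} → α, ∀ η < omega1, f η ∈ X ∧ ∀ ζ < η, R (f ζ) (f η) := by
  have : Nonempty α := (Set.Infinite.nonempty fun h => hX h.countable).to_type
  let good : (Ordinal → α) → Ordinal → α → Prop := fun f η ξ => ξ ∈ X ∧ ∀ ζ < η, R (f ζ) ξ
  let f : Ordinal → α := Ordinal.lt_wf.fix fun η ih =>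
    Classical.epsilon fun ξ => ξ ∈ X ∧ ∀ ζ (hζ : ζ < η), R (ih ζ hζ) ξ
  have hf : ∀ η, f η = Classical.epsilon (good f η) := Ordinal.lt_wf.fix_eq _
  refine ⟨f, fun η => ?_⟩
  induction η using WellFoundedLT.induction with
  | _ η ih =>
    intro hη
    have hprev : ∀ ζ ∈ Set.Iio η, f ζ ∈ X := fun ζ hζ => (ih ζ hζ (hζ.trans hη)).1
    have hbad : (⋃ ζ ∈ Set.Iio η, {ξ | ξ ∈ X ∧ ¬ R (f ζ) ξ}).Countable :=
      (countable_Iio_of_lt_omega1 hη).biUnion fun ζ hζ => hR _ (hprev ζ hζ)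
    obtain ⟨ξ, hξX, hξ⟩ := Set.Infinite.nonempty fun hfin =>
      hX ((hfin.countable.union hbad).mono (Set.subset_sdiff_union X _))
    have hgood : good f η ξ := ⟨hξX, fun ζ hζ => by
      by_contra hn
      exact hξ (Set.mem_biUnion hζ ⟨hξX, hn⟩)⟩
    rw [hf η]
    exact Classical.epsilon_spec ⟨ξ, hgood⟩

namespace TreeSystem

variable {T : Type*} [PartialOrder T] (S : TreeSystem T)

lemma ht_mono : Monotone S.ht := fun _ _ h =>
  h.lt_or_eq.elim (fun h => (S.ht_strictMono h).le) fun h => h ▸ le_rfl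

lemma eq_of_le_of_ht_eq {x y : T} (h : x ≤ y) (hh : S.ht x = S.ht y) : x = y :=
  h.lt_or_eq.resolve_left fun h' => (S.ht_strictMono h').ne hh

lemma le_total_of_le (S : TreeSystem T) {x y z : T} (hy : y ≤ x) (hz : z ≤ x) :
    y ≤ z ∨ z ≤ y := by
  rcases hy.lt_or_eq with hy | rfl
  · rcases hz.lt_or_eq with hz | rfl
    · exact S.pred_chain x y z hy hz
    · exact Or.inl hy.le
  · exact Or.inr hz

lemma eq_of_le_of_le_of_ht_eq {x y z : T} (hy : y ≤ x) (hz : z ≤ x) (hh : S.ht y = S.ht z) :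
    y = z :=
  (S.le_total_of_le hy hz).elim (S.eq_of_le_of_ht_eq · hh) fun h =>
    (S.eq_of_le_of_ht_eq h hh.symm).symm

lemma Delta_comm (x y : T) : S.Delta x y = S.Delta y x := by
  simp only [Delta, and_comm]

lemma add_one_le_Delta (hS : BddAbove (Set.range S.ht)) {x y z : T} (hx : z ≤ x) (hy : z ≤ y) :
    S.ht z + 1 ≤ S.Delta x y := by
  obtain ⟨b, hb⟩ := hS
  refine le_csSup ⟨b + 1, ?_⟩ ⟨z, ⟨hx, hy⟩, rfl⟩
  rintro _ ⟨u, -, rfl⟩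
  exact add_le_add_left (hb ⟨u, rfl⟩) 1

lemma Delta_le_of_ne {x y c d : T} (hc : c ≤ x) (hd : d ≤ y) (hh : S.ht c = S.ht d)
    (hne : c ≠ d) : S.Delta x y ≤ S.ht c + 1 := by
  refine csSup_le' ?_
  rintro _ ⟨z, ⟨hzx, hzy⟩, rfl⟩
  refine add_le_add_left (S.ht_mono ?_) 1
  refine (S.le_total_of_le hzx hc).resolve_right fun hcz => hne ?_
  exact S.eq_of_le_of_le_of_ht_eq (hcz.trans hzy) hd hh

/-- Junk value `x` unless `o < S.ht x`. -/
noncomputable def predAt (x : T) (o : Ordinal) : T :=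
  if h : o < S.ht x then (S.pred_exists x o h).choose else x

lemma predAt_spec {x : T} {o : Ordinal} (h : o < S.ht x) :
    S.predAt x o < x ∧ S.ht (S.predAt x o) = o := by
  rw [predAt, dif_pos h]
  exact (S.pred_exists x o h).choose_spec

variable {S} {n : ℕ}

lemma IsOmegaOneTree.bddAbove_range_ht (h : S.IsOmegaOneTree) :
    BddAbove (Set.range S.ht) :=
  ⟨omega1, Set.forall_mem_range.mpr fun x => (h.1 x).le⟩

lemma IsOmegaOneTree.countable_setOf_ht_le (h : S.IsOmegaOneTree)
    {τ : Ordinal} (hτ : τ < omega1) : {x : T | S.ht x ≤ τ}.Countable := by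
  refine ((countable_Iic_of_lt_omega1 hτ).biUnion fun o _ => h.2.1 o).mono fun x hx => ?_
  exact Set.mem_biUnion (show S.ht x ∈ Set.Iic τ from hx) rfl

lemma IsOmegaOneTree.countable_setOf_exists_ht_le (h : S.IsOmegaOneTree) {a : Ordinal → ℕ → T}
    (hdisj : ∀ ξ, ξ < omega1 → ∀ δ, δ < omega1 → ξ ≠ δ →
      ∀ i, i < n → ∀ j, j < n → a ξ i ≠ a δ j)
    {τ : Ordinal} (hτ : τ < omega1) :
    {ξ | ξ < omega1 ∧ ∃ i < n, S.ht (a ξ i) ≤ τ}.Countable := by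
  have hcoord : ∀ i < n, {ξ | ξ < omega1 ∧ S.ht (a ξ i) ≤ τ}.Countable := by
    intro i hi
    refine Set.countable_of_injective_of_countable_image (f := (a · i)) ?_
      ((h.countable_setOf_ht_le hτ).mono ?_)
    · rintro ξ ⟨hξ, -⟩ δ ⟨hδ, -⟩ heq
      by_contra hne
      exact hdisj ξ hξ δ hδ hne i hi i hi heq
    · rintro _ ⟨ξ, ⟨-, hle⟩, rfl⟩
      exact hle
  refine ((Set.finite_lt_nat n).countable.biUnion hcoord).mono ?_
  rintro ξ ⟨hξ, i, hi, hle⟩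
  exact Set.mem_biUnion hi ⟨hξ, hle⟩

def RealizesTypesAbove (S : TreeSystem T) (n : ℕ) : Prop :=
  ∀ c : ℕ → T,
    (∀ i, i < n → ∀ j, j < n → S.ht (c i) = S.ht (c j)) →
    (∀ i, i < n → ∀ j, j < n → i ≠ j → c i ≠ c j) →
    ∀ a : Ordinal → ℕ → T,
      (∀ ξ, ξ < omega1 → ∀ i, i < n → c i < a ξ i) →
      (∀ ξ δ : Ordinal, ξ < δ → δ < omega1 →
        ∀ i, i < n → ∀ j, j < n → S.ht (a ξ i) < S.ht (a δ j)) →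
      ∀ g : ℕ → Bool, ∃ ξ β : Ordinal, ξ < β ∧ β < omega1 ∧
        ∀ i, i < n → (a ξ i < a β i ↔ g i = true)

lemma Entangled.realizesTypesAbove (h : S.IsOmegaOneTree) (hE : S.Entangled n) :
    S.RealizesTypesAbove n := by
  intro c hce hcinj a habove hinc g
  have hinj : ∀ ξ, ξ < omega1 → ∀ i, i < n → ∀ j, j < n → i ≠ j → a ξ i ≠ a ξ j := by
    intro ξ hξ i hi j hj hij heq
    refine hcinj i hi j hj hij (S.eq_of_le_of_le_of_ht_eq (habove ξ hξ i hi).le ?_ (hce i hi j hj))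
    exact heq ▸ (habove ξ hξ j hj).le
  have hdisj : ∀ ξ, ξ < omega1 → ∀ δ, δ < omega1 → ξ ≠ δ →
      ∀ i, i < n → ∀ j, j < n → a ξ i ≠ a δ j := by
    intro ξ hξ δ hδ hne i hi j hj heq
    rcases hne.lt_or_gt with hlt | hlt
    · exact (hinc ξ δ hlt hδ i hi j hj).ne (congrArg S.ht heq)
    · exact (hinc δ ξ hlt hξ j hj i hi).ne (congrArg S.ht heq).symm
  refine hE a hinj hdisj ⟨S.ht (c 0) + 1, add_one_lt_omega1 (h.1 _), fun ξ hξ i j hij hj => ?_⟩ g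
  have hi := hij.trans hj
  calc S.Delta (a ξ i) (a ξ j) ≤ S.ht (c i) + 1 :=
        S.Delta_le_of_ne (habove ξ hξ i hi).le (habove ξ hξ j hj).le (hce i hi j hj)
          (hcinj i hi j hj hij.ne)
    _ = S.ht (c 0) + 1 := by rw [hce i hi 0 (by omega)]

lemma IsOmegaOneTree.exists_not_countable_above (h : S.IsOmegaOneTree) {a : Ordinal → ℕ → T}
    (hdisj : ∀ ξ, ξ < omega1 → ∀ δ, δ < omega1 → ξ ≠ δ →
      ∀ i, i < n → ∀ j, j < n → a ξ i ≠ a δ j)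
    {β : Ordinal} (hβ : β < omega1) :
    ∃ X ⊆ Set.Iio omega1, ¬ X.Countable ∧
      ∃ c : ℕ → T, (∀ i < n, S.ht (c i) = β) ∧ ∀ ξ ∈ X, ∀ i < n, c i < a ξ i := by
  set X₀ := {ξ | ξ < omega1 ∧ ∀ i < n, β < S.ht (a ξ i)}
  have hX₀ : ¬ X₀.Countable := fun hc => not_countable_Iio_omega1 <|
    (hc.union (h.countable_setOf_exists_ht_le hdisj hβ)).mono fun ξ (hξ : ξ < omega1) => by
      by_cases hall : ∀ i < n, β < S.ht (a ξ i)
      · exact Or.inl ⟨hξ, hall⟩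
      · push Not at hall
        exact Or.inr ⟨hξ, hall⟩
  let proj : Ordinal → Fin n → T := fun ξ i => S.predAt (a ξ i) β
  obtain ⟨v, hv⟩ := Set.exists_not_countable_inter_preimage_singleton hX₀
    (Set.countable_univ_pi fun _ => h.2.1 β) (f := proj)
    fun ξ hξ i _ => (S.predAt_spec (hξ.2 i i.2)).2
  obtain ⟨ξ₀, hξ₀⟩ := Set.Infinite.nonempty fun hfin => hv hfin.countable
  refine ⟨_, fun ξ hξ => hξ.1.1, hv, fun i => S.predAt (a ξ₀ i) β,
    fun i hi => (S.predAt_spec (hξ₀.1.2 i hi)).2, fun ξ hξ i hi => ?_⟩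
  have hproj : proj ξ = proj ξ₀ := hξ.2.trans hξ₀.2.symm
  have hpred : S.predAt (a ξ i) β = S.predAt (a ξ₀ i) β := congrFun hproj ⟨i, hi⟩
  exact hpred.symm.trans_lt (S.predAt_spec (hξ.1.2 i hi)).1

lemma RealizesTypesAbove.entangled (h : S.IsOmegaOneTree) (hR : S.RealizesTypesAbove n) :
    S.Entangled n := by
  intro a _ hdisj ⟨β₀, hβ₀, hΔ⟩ g
  obtain ⟨X, hXω, hX, c, hc, hcX⟩ := h.exists_not_countable_above hdisj hβ₀
  have hcinj : ∀ i, i < n → ∀ j, j < n → i ≠ j → c i ≠ c j := by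
    intro i hi j hj hij hcij
    obtain ⟨ξ, hξ⟩ := Set.Infinite.nonempty fun hfin => hX hfin.countable
    have hlow : β₀ + 1 ≤ S.Delta (a ξ i) (a ξ j) := hc i hi ▸
      S.add_one_le_Delta h.bddAbove_range_ht (hcX ξ hξ i hi).le (hcij ▸ (hcX ξ hξ j hj).le)
    have hhigh : S.Delta (a ξ i) (a ξ j) ≤ β₀ := by
      rcases hij.lt_or_gt with hlt | hlt
      · exact hΔ ξ (hXω hξ) i j hlt hj
      · rw [Delta_comm]
        exact hΔ ξ (hXω hξ) j i hlt hi
    exact (Order.lt_add_one_iff.mpr le_rfl).not_ge (hlow.trans hhigh)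
  let R : Ordinal → Ordinal → Prop := fun p ξ =>
    p < ξ ∧ ∀ i < n, ∀ j < n, S.ht (a p i) < S.ht (a ξ j)
  have hexceptions : ∀ p ∈ X, {ξ | ξ ∈ X ∧ ¬ R p ξ}.Countable := by
    intro p hp
    let τ := (Finset.range n).sup fun i => S.ht (a p i)
    have hτ : τ < omega1 := (Finset.sup_lt_iff omega1_isSuccLimit.bot_lt).mpr fun i _ => h.1 _
    refine ((countable_Iic_of_lt_omega1 (hXω hp)).union
      (h.countable_setOf_exists_ht_le hdisj hτ)).mono ?_
    rintro ξ ⟨hξ, hnR⟩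
    simp only [R, not_and_or, not_lt, not_forall, exists_prop] at hnR
    rcases hnR with hle | ⟨i, hi, j, hj, hle⟩
    · exact Or.inl hle
    · exact Or.inr ⟨hXω hξ, j, hj,
        hle.trans (Finset.le_sup (f := fun i => S.ht (a p i)) (Finset.mem_range.mpr hi))⟩
  obtain ⟨f, hf⟩ := exists_rel_seq_of_countable_not_rel hX hexceptions
  obtain ⟨ξ, β, hξβ, hβ, hg⟩ := hR c (fun i hi j hj => (hc i hi).trans (hc j hj).symm) hcinj
    (fun η i => a (f η) i) (fun η hη i hi => hcX _ (hf η hη).1 i hi)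
    (fun ξ δ hξδ hδ => ((hf δ hδ).2 ξ hξδ).2) g
  exact ⟨f ξ, f β, ((hf β hβ).2 ξ hξβ).1, hXω (hf β hβ).1, hg⟩

end TreeSystem

theorem stmt19_general {T : Type*} [PartialOrder T] (S : TreeSystem T)
    (h : S.IsOmegaOneTree) (n : ℕ) :
    S.Entangled n ↔
      ∀ c : ℕ → T,
        (∀ i, i < n → ∀ j, j < n → S.ht (c i) = S.ht (c j)) →
        (∀ i, i < n → ∀ j, j < n → i ≠ j → c i ≠ c j) →
        ∀ a : Ordinal → ℕ → T,
          (∀ ξ, ξ < omega1 → ∀ i, i < n → c i < a ξ i) →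
          (∀ ξ δ : Ordinal, ξ < δ → δ < omega1 →
            ∀ i, i < n → ∀ j, j < n → S.ht (a ξ i) < S.ht (a δ j)) →
          ∀ g : ℕ → Bool, ∃ ξ β : Ordinal, ξ < β ∧ β < omega1 ∧
            ∀ i, i < n → (a ξ i < a β i ↔ g i = true) :=
  ⟨fun hE => hE.realizesTypesAbove h, fun hR => TreeSystem.RealizesTypesAbove.entangled h hR⟩

/-- an ω₁-tree is `n`-entangled (for `n ≥ 1`) iff for every injective
equal-height tuple `c⃗` and every ω₁-sequence of `n`-tuples above `c⃗` with increasing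
height, every type `g : n → 2` is realized by some pair of indices `ξ < β`. -/
theorem stmt19 {T : Type*} [PartialOrder T] (S : TreeSystem T)
    (h : S.IsOmegaOneTree) (n : ℕ) (hn : 1 ≤ n) :
    S.Entangled n ↔
      ∀ c : ℕ → T,
        (∀ i, i < n → ∀ j, j < n → S.ht (c i) = S.ht (c j)) →
        (∀ i, i < n → ∀ j, j < n → i ≠ j → c i ≠ c j) →
        ∀ a : Ordinal → ℕ → T,
          (∀ ξ, ξ < omega1 → ∀ i, i < n → c i < a ξ i) →
          (∀ ξ δ : Ordinal, ξ < δ → δ < omega1 →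
            ∀ i, i < n → ∀ j, j < n → S.ht (a ξ i) < S.ht (a δ j)) →
          ∀ g : ℕ → Bool, ∃ ξ β : Ordinal, ξ < β ∧ β < omega1 ∧
            ∀ i, i < n → (a ξ i < a β i ↔ g i = true) :=
  stmt19_general S h n
end
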